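/- arXiv:2103.02430 — 3 statements merged into one kernel-verified Lean document; each statement's English description precedes it below -/
import Mathlib

section
/- Let D be a finite subset of ℝ^n × ℝ^n and suppose that dom H_D + R_-(H_D) = ℝ^n, where R_-(H_D) is the reachable set of the minimal linear process associated with H_D. Then H_D is reachable if and only if every convex process H ∈ Σ_D is reachable. -/
/-!
If `H_D` is reachable, the hypothesis `dom H_D + R_-(H_D) = ℝⁿ` forces `R(H_D) = ℝⁿ`; since
`graph H_D = cone D` lies in the graph of every `H ∈ Σ_D`, each such `H` then reaches every state.

Why `R(H) = ℝⁿ` for a reachable convex process `H` with `dom H + V = ℝⁿ`, `V = R_-(H)`: write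
each state as `a + b` with `a ∈ dom H`, `b ∈ V`, and step to a successor of `a`. Iterating gives
`x` with `x (k+1) ∈ H (x k - r k)` and `r k ∈ V`. The perturbations are absorbed along the
lineality space: by the ascending chain condition `V` is reached in a uniform number `N` of
steps, and superposing `N`-step lineal trajectories from `0` to the `r k` yields `e` with
`(e k - r k, e (k+1)) ∈ lin (graph H)` and `e 0 ∈ V`. Then `x - e` is an infinite trajectory of
`H`, so `x 0 - e 0` is feasible, hence reachable, and `x 0 ∈ R(H) + V ⊆ R(H)`.
-/

open Matrix Set Pointwise

/-- A set-valued map from `ℝ^n` to subsets of `ℝ^n`. -/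
abbrev SVMap (n : ℕ) := (Fin n → ℝ) → Set (Fin n → ℝ)

/-- The graph of a set-valued map. -/
def graphOf {n : ℕ} (H : SVMap n) : Set ((Fin n → ℝ) × (Fin n → ℝ)) :=
  {p | p.2 ∈ H p.1}

/-- The set-valued map associated with a graph. -/
def ofGraph {n : ℕ} (G : Set ((Fin n → ℝ) × (Fin n → ℝ))) : SVMap n :=
  fun x => {y | (x, y) ∈ G}

/-- A convex cone: a nonempty convex set closed under nonnegative scalar multiplication. -/
def IsConvexCone {V : Type*} [AddCommGroup V] [Module ℝ V] (C : Set V) : Prop :=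
  C.Nonempty ∧ Convex ℝ C ∧ ∀ c : ℝ, 0 ≤ c → ∀ x ∈ C, c • x ∈ C

/-- A convex process: a set-valued map whose graph is a convex cone. -/
def IsConvexProcess {n : ℕ} (H : SVMap n) : Prop :=
  IsConvexCone (graphOf H)

/-- A linear process: a set-valued map whose graph is a linear subspace. -/
def IsLinearProcess {n : ℕ} (H : SVMap n) : Prop :=
  ∃ S : Submodule ℝ ((Fin n → ℝ) × (Fin n → ℝ)), graphOf H = (S : Set _)

/-- The domain of a set-valued map. -/
def domOf {n : ℕ} (H : SVMap n) : Set (Fin n → ℝ) := {x | (H x).Nonempty}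

/-- The image of a set-valued map. -/
def imOf {n : ℕ} (H : SVMap n) : Set (Fin n → ℝ) := {y | ∃ x, y ∈ H x}

/-- The reachable set: states reachable from the origin by a finite trajectory. -/
def reachSet {n : ℕ} (H : SVMap n) : Set (Fin n → ℝ) :=
  {ξ | ∃ (q : ℕ) (x : ℕ → (Fin n → ℝ)),
    x 0 = 0 ∧ x q = ξ ∧ ∀ k, k < q → x (k + 1) ∈ H (x k)}

/-- The null-controllable set: states steered to the origin by a finite trajectory. -/
def nullSet {n : ℕ} (H : SVMap n) : Set (Fin n → ℝ) :=
  {ξ | ∃ (q : ℕ) (x : ℕ → (Fin n → ℝ)),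
    x 0 = ξ ∧ x q = 0 ∧ ∀ k, k < q → x (k + 1) ∈ H (x k)}

/-- The feasible set: states from which an infinite trajectory emanates. -/
def feasSet {n : ℕ} (H : SVMap n) : Set (Fin n → ℝ) :=
  {ξ | ∃ x : ℕ → (Fin n → ℝ), x 0 = ξ ∧ ∀ k, x (k + 1) ∈ H (x k)}

/-- `H` is reachable if every feasible state is reachable. -/
def IsReachable {n : ℕ} (H : SVMap n) : Prop := feasSet H ⊆ reachSet H

/-- `H` is null-controllable if every feasible state is null-controllable. -/
def IsNullControllable {n : ℕ} (H : SVMap n) : Prop := feasSet H ⊆ nullSet H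

/-- The minimal linear process `L_-` associated with `H`: graph `L_- = lin(graph H) = (-graph H) ∩ graph H`. -/
def Lminus {n : ℕ} (H : SVMap n) : SVMap n := ofGraph ((-(graphOf H)) ∩ graphOf H)

/-- The maximal linear process `L_+` associated with `H`: graph `L_+ = Lin(graph H) = graph H - graph H`. -/
def Lplus {n : ℕ} (H : SVMap n) : SVMap n := ofGraph (graphOf H - graphOf H)

/-- The negative dual process: `p ∈ H^-(q)` iff `⟨p,x⟩ ≥ ⟨q,y⟩` for all `(x,y) ∈ graph H`. -/
def dualNeg {n : ℕ} (H : SVMap n) : SVMap n :=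
  fun q => {p | ∀ x y, y ∈ H x → q ⬝ᵥ y ≤ p ⬝ᵥ x}

/-- The positive dual process: `p ∈ H^+(q)` iff `⟨p,x⟩ ≤ ⟨q,y⟩` for all `(x,y) ∈ graph H`. -/
def dualPos {n : ℕ} (H : SVMap n) : SVMap n :=
  fun q => {p | ∀ x y, y ∈ H x → p ⬝ᵥ x ≤ q ⬝ᵥ y}

/-- `(lam, ξ)` is an eigenpair of `G` if `ξ ≠ 0` and `lam • ξ ∈ G(ξ)`. -/
def IsEigenpair {n : ℕ} (G : SVMap n) (lam : ℝ) (ξ : Fin n → ℝ) : Prop :=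
  ξ ≠ 0 ∧ lam • ξ ∈ G ξ

/-- The conic hull: all conic (nonnegative) combinations of elements of `S`. -/
def coneHull {V : Type*} [AddCommGroup V] [Module ℝ V] (S : Set V) : Set V :=
  {x | ∃ (k : ℕ) (c : Fin k → ℝ) (f : Fin k → V),
    (∀ i, 0 ≤ c i) ∧ (∀ i, f i ∈ S) ∧ x = ∑ i, c i • f i}

/-- The most powerful unfalsified process `H_D`: the convex process with graph `cone D`. -/
def mpup {n : ℕ} (D : Set ((Fin n → ℝ) × (Fin n → ℝ))) : SVMap n := ofGraph (coneHull D)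

/-- The inner product on `ℝ^n × ℝ^n`. -/
def pairDot {n : ℕ} (p q : (Fin n → ℝ) × (Fin n → ℝ)) : ℝ := p.1 ⬝ᵥ q.1 + p.2 ⬝ᵥ q.2

/-- The positive polar cone of a subset of `ℝ^n × ℝ^n`. -/
def polarPos {n : ℕ} (C : Set ((Fin n → ℝ) × (Fin n → ℝ))) :
    Set ((Fin n → ℝ) × (Fin n → ℝ)) :=
  {η | ∀ d ∈ C, 0 ≤ pairDot d η}

/-- The negative polar cone of a subset of `ℝ^n × ℝ^n`. -/
def polarNeg {n : ℕ} (C : Set ((Fin n → ℝ) × (Fin n → ℝ))) :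
    Set ((Fin n → ℝ) × (Fin n → ℝ)) :=
  {η | ∀ d ∈ C, pairDot d η ≤ 0}

/-- The data set `D = {(x_t, y_t)}` whose elements are the column pairs of `X` and `Y`. -/
def colPairs {n T : ℕ} (X Y : Matrix (Fin n) (Fin T) ℝ) :
    Set ((Fin n → ℝ) × (Fin n → ℝ)) :=
  {p | ∃ t : Fin T, p = (fun i => X i t, fun i => Y i t)}

/-- The rows of the matrix `[Z −W]`, viewed as pairs `(z_i, -w_i)` in `ℝ^n × ℝ^n`. -/
def rowPairsZW {m n : ℕ} (Z W : Matrix (Fin m) (Fin n) ℝ) :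
    Set ((Fin n → ℝ) × (Fin n → ℝ)) :=
  {p | ∃ i : Fin m, p = (fun j => Z i j, fun j => -W i j)}

/-- `X ℝ_+^T`: the image of the nonnegative orthant under `X`. -/
def posImage {n T : ℕ} (X : Matrix (Fin n) (Fin T) ℝ) : Set (Fin n → ℝ) :=
  {x | ∃ v : Fin T → ℝ, (∀ t, 0 ≤ v t) ∧ x = X *ᵥ v}

/-- The set-valued map `S ↦ W^{-1}(Z S)`. -/
def mapWiZ {m n : ℕ} (Z W : Matrix (Fin m) (Fin n) ℝ) :
    Set (Fin n → ℝ) → Set (Fin n → ℝ) :=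
  fun S => {y | ∃ x ∈ S, W *ᵥ y = Z *ᵥ x}

/-- The set-valued map `S ↦ Z^{-1}(W S)`. -/
def mapZiW {m n : ℕ} (Z W : Matrix (Fin m) (Fin n) ℝ) :
    Set (Fin n → ℝ) → Set (Fin n → ℝ) :=
  fun S => {y | ∃ x ∈ S, Z *ᵥ y = W *ᵥ x}

/-- The set-valued map `S ↦ Y(X^{-1} S)`. -/
def mapYXi {n T : ℕ} (X Y : Matrix (Fin n) (Fin T) ℝ) :
    Set (Fin n → ℝ) → Set (Fin n → ℝ) :=
  fun S => {y | ∃ v : Fin T → ℝ, X *ᵥ v ∈ S ∧ y = Y *ᵥ v}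

/-- The set-valued map `S ↦ X(Y^{-1} S)`. -/
def mapXYi {n T : ℕ} (X Y : Matrix (Fin n) (Fin T) ℝ) :
    Set (Fin n → ℝ) → Set (Fin n → ℝ) :=
  fun S => {y | ∃ v : Fin T → ℝ, Y *ᵥ v ∈ S ∧ y = X *ᵥ v}

/-- The image of a set under a set-valued map. -/
def imageSV {n : ℕ} (H : SVMap n) (S : Set (Fin n → ℝ)) : Set (Fin n → ℝ) :=
  {y | ∃ x ∈ S, y ∈ H x}

/-- The inverse of a set-valued map. -/
def invSV {n : ℕ} (H : SVMap n) : SVMap n := fun y => {x | y ∈ H x}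

/-- The linear map `(a, b) ↦ (b, -a)` on `ℝ^n × ℝ^n`. -/
def flipMap {n : ℕ} : ((Fin n → ℝ) × (Fin n → ℝ)) → ((Fin n → ℝ) × (Fin n → ℝ)) :=
  fun p => (p.2, -p.1)

/-- The orthogonal complement of a subset of `ℝ^n × ℝ^n`. -/
def orthPair {n : ℕ} (C : Set ((Fin n → ℝ) × (Fin n → ℝ))) :
    Set ((Fin n → ℝ) × (Fin n → ℝ)) :=
  {q | ∀ p ∈ C, pairDot p q = 0}

/-- The dual linear process `L^⊥`, with graph `{(b, -a) : (a, b) ∈ (graph L)^⊥}`. -/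
def perpProcess {n : ℕ} (L : SVMap n) : SVMap n :=
  ofGraph (flipMap '' orthPair (graphOf L))

/-- The orthogonal complement of a subset of `ℝ^n`. -/
def orthVec {n : ℕ} (S : Set (Fin n → ℝ)) : Set (Fin n → ℝ) :=
  {x | ∀ y ∈ S, x ⬝ᵥ y = 0}

section ConvexCone

variable {V : Type*} [AddCommGroup V] [Module ℝ V] {C : Set V}

theorem IsConvexCone.zero_mem (h : IsConvexCone C) : (0 : V) ∈ C := by
  obtain ⟨x, hx⟩ := h.1
  simpa using h.2.2 0 le_rfl x hx

theorem IsConvexCone.add_mem (h : IsConvexCone C) {a b : V} (ha : a ∈ C) (hb : b ∈ C) :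
    a + b ∈ C := by
  have hmid := h.2.1 ha hb (by norm_num : (0 : ℝ) ≤ 1 / 2) (by norm_num : (0 : ℝ) ≤ 1 / 2)
    (by norm_num)
  convert h.2.2 2 zero_le_two _ hmid using 1
  module

def IsConvexCone.toPointedCone (h : IsConvexCone C) : PointedCone ℝ V where
  carrier := C
  add_mem' := h.add_mem
  zero_mem' := h.zero_mem
  smul_mem' c _ hx := h.2.2 c c.2 _ hx

theorem PointedCone.isConvexCone (P : PointedCone ℝ V) : IsConvexCone (P : Set V) :=
  ⟨⟨0, P.zero_mem⟩, P.convex, fun _ hc _ hx => P.smul_mem hc hx⟩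

theorem coneHull_eq_hull (S : Set V) : coneHull S = PointedCone.hull ℝ S := by
  ext x
  rw [SetLike.mem_coe, Submodule.mem_span_set']
  constructor
  · rintro ⟨k, c, f, hc, hf, rfl⟩
    exact ⟨k, fun i => ⟨c i, hc i⟩, fun i => ⟨f i, hf i⟩, by simp only [Nonneg.mk_smul]⟩
  · rintro ⟨k, c, f, rfl⟩
    exact ⟨k, fun i => c i, fun i => f i, fun i => (c i).2, fun i => (f i).2,
      by simp only [Nonneg.coe_smul]⟩

end ConvexCone

namespace Submodule

section Semiring

variable {R E : Type*} [Semiring R] [AddCommMonoid E] [Module R E] (S : Submodule R (E × E))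

def reachIn (p : ℕ) : Submodule R E where
  carrier := {ξ | ∃ x : ℕ → E, x 0 = 0 ∧ x p = ξ ∧ ∀ k < p, (x k, x (k + 1)) ∈ S}
  zero_mem' := ⟨fun _ => 0, rfl, rfl, fun _ _ => S.zero_mem⟩
  add_mem' := by
    rintro _ _ ⟨x, hx0, rfl, hx⟩ ⟨y, hy0, rfl, hy⟩
    exact ⟨x + y, by simp [hx0, hy0], rfl, fun k hk => S.add_mem (hx k hk) (hy k hk)⟩
  smul_mem' := by
    rintro c _ ⟨x, hx0, rfl, hx⟩
    exact ⟨c • x, by simp [hx0], rfl, fun k hk => S.smul_mem c (hx k hk)⟩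

theorem reachIn_mono : Monotone S.reachIn := by
  refine monotone_nat_of_le_succ fun p ξ ⟨x, hx0, hxp, hx⟩ => ?_
  -- prepend a rest at `0`; at `k = 0` truncated subtraction gives `x (0 - 1) = x 0 = 0`
  refine ⟨fun k => x (k - 1), hx0, hxp, fun k hk => ?_⟩
  rcases k with _ | k
  · simp only [Nat.zero_sub, zero_add, Nat.sub_self, hx0]
    exact S.zero_mem
  · exact hx k (by omega)

theorem mem_reachIn_of_trajectory {x : ℕ → E} (hx0 : x 0 = 0) {N : ℕ}
    (hx : ∀ k < N, (x k, x (k + 1)) ∈ S) {p : ℕ} (hp : p ≤ N) : x p ∈ S.reachIn p :=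
  ⟨x, hx0, rfl, fun k hk => hx k (by omega)⟩

theorem exists_reachIn_le [IsNoetherian R E] : ∃ N, ∀ p, S.reachIn p ≤ S.reachIn N := by
  obtain ⟨N, hN⟩ := monotone_stabilizes_iff_noetherian.mpr inferInstance ⟨_, S.reachIn_mono⟩
  refine ⟨N, fun p => ?_⟩
  rcases le_total p N with h | h
  · exact S.reachIn_mono h
  · exact (hN p h).ge

end Semiring

section Ring

variable {R E : Type*} [Ring R] [AddCommGroup E] [Module R E] (S : Submodule R (E × E))

theorem exists_correction {N : ℕ} (r : ℕ → E) (hr : ∀ k, r k ∈ S.reachIn N) :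
    ∃ e : ℕ → E, e 0 ∈ S.reachIn N ∧ ∀ j, (e j - r j, e (j + 1)) ∈ S := by
  choose w hw0 hwN hw using hr
  -- `e j` superposes the pending trajectories: the one for `r (j + i)`, started at time
  -- `j + i - N`, is at its state `N - i` at time `j`.
  refine ⟨fun j => ∑ i ∈ Finset.range (N + 1), w (j + i) (N - i), ?_, fun j => ?_⟩
  · refine Submodule.sum_mem _ fun i _ => ?_
    exact S.reachIn_mono (Nat.sub_le N i)
      (S.mem_reachIn_of_trajectory (hw0 _) (hw _) (Nat.sub_le N i))
  · have hfst : ∑ i ∈ Finset.range (N + 1), w (j + i) (N - i) - r j =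
        ∑ i ∈ Finset.range N, w (j + 1 + i) (N - (i + 1)) := by
      rw [Finset.sum_range_succ', add_zero, Nat.sub_zero, hwN, add_sub_cancel_right]
      exact Finset.sum_congr rfl fun i _ => by congr 1; omega
    have hsnd : ∑ i ∈ Finset.range (N + 1), w (j + 1 + i) (N - i) =
        ∑ i ∈ Finset.range N, w (j + 1 + i) (N - i) := by
      rw [Finset.sum_range_succ, Nat.sub_self, hw0, add_zero]
    have hpair : (∑ i ∈ Finset.range N, w (j + 1 + i) (N - (i + 1)),
        ∑ i ∈ Finset.range N, w (j + 1 + i) (N - i)) =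
        ∑ i ∈ Finset.range N, (w (j + 1 + i) (N - (i + 1)), w (j + 1 + i) (N - i)) :=
      Prod.ext (by rw [Prod.fst_sum]) (by rw [Prod.snd_sum])
    beta_reduce
    rw [hfst, hsnd, hpair]
    refine Submodule.sum_mem _ fun i hi => ?_
    have hi : i < N := Finset.mem_range.mp hi
    simpa [show N - i = N - (i + 1) + 1 by omega] using hw (j + 1 + i) (N - (i + 1)) (by omega)

end Ring

end Submodule

section Processes

variable {n : ℕ}

theorem mem_reachSet_ofGraph {R : Type*} [Semiring R] [Module R (Fin n → ℝ)]
    (S : Submodule R ((Fin n → ℝ) × (Fin n → ℝ))) {ξ : Fin n → ℝ} :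
    ξ ∈ reachSet (ofGraph (S : Set _)) ↔ ∃ p, ξ ∈ S.reachIn p :=
  Iff.rfl

theorem add_mem_reachSet_ofGraph {R : Type*} [Semiring R] [Module R (Fin n → ℝ)]
    (S : Submodule R ((Fin n → ℝ) × (Fin n → ℝ))) {ξ η : Fin n → ℝ}
    (hξ : ξ ∈ reachSet (ofGraph (S : Set _))) (hη : η ∈ reachSet (ofGraph (S : Set _))) :
    ξ + η ∈ reachSet (ofGraph (S : Set _)) := by
  obtain ⟨p, hp⟩ := (mem_reachSet_ofGraph S).mp hξ
  obtain ⟨q, hq⟩ := (mem_reachSet_ofGraph S).mp hη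
  exact (mem_reachSet_ofGraph S).mpr ⟨max p q, add_mem
    (S.reachIn_mono (le_max_left p q) hp) (S.reachIn_mono (le_max_right p q) hq)⟩

theorem reachSet_mono {H K : SVMap n} (h : graphOf H ⊆ graphOf K) :
    reachSet H ⊆ reachSet K := by
  rintro ξ ⟨q, x, hx0, hxq, hx⟩
  exact ⟨q, x, hx0, hxq, fun k hk => h (show (x k, x (k + 1)) ∈ graphOf H from hx k hk)⟩

namespace IsConvexProcess

variable {H : SVMap n}

theorem Lminus_eq (hH : IsConvexProcess H) :
    Lminus H = ofGraph (hH.toPointedCone.lineal : Set _) := by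
  funext x
  ext y
  exact and_comm

theorem add_mem_reachSet (hH : IsConvexProcess H) {ξ η : Fin n → ℝ} (hξ : ξ ∈ reachSet H)
    (hη : η ∈ reachSet H) :
    ξ + η ∈ reachSet H :=
  add_mem_reachSet_ofGraph hH.toPointedCone hξ hη

theorem mem_feasSet_add_of_perturbed (hH : IsConvexProcess H) {x r : ℕ → Fin n → ℝ}
    (hr : ∀ k, r k ∈ reachSet (Lminus H)) (hx : ∀ k, x (k + 1) ∈ H (x k - r k)) :
    x 0 ∈ feasSet H + reachSet (Lminus H) := by
  set S := hH.toPointedCone.lineal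
  rw [hH.Lminus_eq] at hr ⊢
  obtain ⟨N, hN⟩ := S.exists_reachIn_le
  have hrN (k : ℕ) : r k ∈ S.reachIn N := by
    obtain ⟨p, hp⟩ := (mem_reachSet_ofGraph S).mp (hr k)
    exact hN p hp
  obtain ⟨e, he0, he⟩ := S.exists_correction r hrN
  refine ⟨x 0 - e 0, ⟨fun k => x k - e k, rfl, fun k => ?_⟩, e 0, ⟨N, he0⟩, sub_add_cancel _ _⟩
  have hstep : (x k - r k, x (k + 1)) + -(e k - r k, e (k + 1)) ∈ hH.toPointedCone :=
    add_mem (hx k) (PointedCone.mem_lineal.mp (he k)).2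
  rw [Prod.neg_mk, Prod.mk_add_mk] at hstep
  show (x k - e k, x (k + 1) - e (k + 1)) ∈ hH.toPointedCone
  convert hstep using 2 <;> abel

theorem reachSet_eq_univ (hH : IsConvexProcess H)
    (hdom : domOf H + reachSet (Lminus H) = univ) (hreach : IsReachable H) : reachSet H = univ := by
  have hdec (y : Fin n → ℝ) : ∃ a ∈ domOf H, ∃ b ∈ reachSet (Lminus H), a + b = y :=
    mem_add.mp (by rw [hdom]; exact mem_univ y)
  choose a ha b hb hab using hdec
  choose s hs using ha
  refine eq_univ_of_forall fun ξ => ?_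
  have hx (k : ℕ) : s^[k + 1] ξ ∈ H (s^[k] ξ - b (s^[k] ξ)) := by
    rw [Function.iterate_succ_apply', ← eq_sub_of_add_eq (hab _)]
    exact hs _
  obtain ⟨ζ, hζ, v, hv, rfl⟩ := hH.mem_feasSet_add_of_perturbed (fun k => hb _) hx
  exact hH.add_mem_reachSet (hreach hζ) (reachSet_mono inter_subset_right hv)

end IsConvexProcess

theorem mpup_isConvexProcess (D : Set ((Fin n → ℝ) × (Fin n → ℝ))) :
    IsConvexProcess (mpup D) := by
  show IsConvexCone (coneHull D)
  rw [coneHull_eq_hull]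
  exact PointedCone.isConvexCone _

theorem subset_graphOf_mpup (D : Set ((Fin n → ℝ) × (Fin n → ℝ))) : D ⊆ graphOf (mpup D) := by
  show D ⊆ coneHull D
  rw [coneHull_eq_hull]
  exact PointedCone.subset_hull

theorem graphOf_mpup_subset {D : Set ((Fin n → ℝ) × (Fin n → ℝ))} {H : SVMap n}
    (hH : IsConvexProcess H) (hD : D ⊆ graphOf H) : graphOf (mpup D) ⊆ graphOf H := by
  show coneHull D ⊆ _
  rw [coneHull_eq_hull]
  exact (Submodule.span_le (p := hH.toPointedCone)).mpr hD

end Processes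

theorem stmt2_general {n : ℕ} (D : Set ((Fin n → ℝ) × (Fin n → ℝ)))
    (hdom : domOf (mpup D) + reachSet (Lminus (mpup D)) = Set.univ) :
    IsReachable (mpup D) ↔
      ∀ H : SVMap n, IsConvexProcess H → D ⊆ graphOf H → IsReachable H := by
  refine ⟨fun hreach H hH hDH ξ _ => ?_,
    fun h => h _ (mpup_isConvexProcess D) (subset_graphOf_mpup D)⟩
  have hfull := (mpup_isConvexProcess D).reachSet_eq_univ hdom hreach
  exact reachSet_mono (graphOf_mpup_subset hH hDH) (hfull ▸ mem_univ ξ)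

/-- Theorem 3: if `dom H_D + R_-(H_D) = ℝ^n`, then `H_D` is reachable iff every
convex process consistent with the data `D` is reachable. -/
theorem stmt2 {n : ℕ} (D : Set ((Fin n → ℝ) × (Fin n → ℝ))) (hD : D.Finite)
    (hdom : domOf (mpup D) + reachSet (Lminus (mpup D)) = Set.univ) :
    IsReachable (mpup D) ↔
      ∀ H : SVMap n, IsConvexProcess H → D ⊆ graphOf H → IsReachable H :=
  stmt2_general D hdom
end

section
/- Let D = {(x_t,y_t) : t = 1,…,T} ⊆ ℝ^n × ℝ^n be a finite set with associated matrices X, Y ∈ ℝ^{n×T} and Z, W ∈ ℝ^{ℓ×n}. Then the minimal and maximal linear processes associated with H_D satisfy graph L_-(H_D) = ker [Z −W] = {(x,y) : Zx = Wy} and graph L_+(H_D) = im [X; Y] = {(Xv, Yv) : v ∈ ℝ^T}. -/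
open Matrix Set Pointwise

/-!
The graph of `H_D` is `cone D`, the image of the nonnegative orthant under `v ↦ (X v, Y v)`;
writing `v = v⁺ - v⁻` shows that `cone D - cone D` is the whole image. For the lineality space,
conic Carathéodory writes a finitely generated cone as a finite union of images of orthants under
injective linear maps, so it is closed, and hyperplane separation makes it equal to its bipolar.
Since `D⁺` is generated by the rows of `[Z −W]`, this gives `cone D = {(x, y) | W y ≤ Z x}`, whose
lineality space is `{(x, y) | Z x = W y}`.
-/

section ConeHull

variable {V ι : Type*} [AddCommGroup V] [Module ℝ V] [Fintype ι]

theorem subset_coneHull {S : Set V} : S ⊆ coneHull S := fun x hx =>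
  ⟨1, fun _ => 1, fun _ => x, fun _ => zero_le_one, fun _ => hx, by simp⟩

theorem coneHull_range (f : ι → V) :
    coneHull (range f) = Fintype.linearCombination ℝ f '' Ici 0 := by
  classical
  ext x
  constructor
  · rintro ⟨k, c, g, hc, hg, rfl⟩
    choose j hj using hg
    refine ⟨fun i => ∑ l with j l = i, c l, fun i => Finset.sum_nonneg fun l _ => hc l, ?_⟩
    rw [Fintype.linearCombination_apply, ← Finset.sum_fiberwise Finset.univ j]
    refine Finset.sum_congr rfl fun i _ => ?_
    rw [Finset.sum_smul]
    exact Finset.sum_congr rfl fun l hl => by rw [← hj l, (Finset.mem_filter.1 hl).2]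
  · rintro ⟨c, hc, rfl⟩
    let e := Fintype.equivFin ι
    refine ⟨Fintype.card ι, c ∘ e.symm, f ∘ e.symm, fun _ => hc _, fun _ => mem_range_self _, ?_⟩
    rw [Fintype.linearCombination_apply]
    exact (e.symm.sum_comp fun i => c i • f i).symm

theorem exists_pos_relation_of_not_linearIndepOn {f : ι → V} {s : Finset ι}
    (h : ¬LinearIndepOn ℝ f s) :
    ∃ a : ι → ℝ, (∀ i ∉ s, a i = 0) ∧ Fintype.linearCombination ℝ f a = 0 ∧ ∃ i, 0 < a i := by
  classical
  obtain ⟨g, hg, i, hi, hgi⟩ := not_linearIndepOn_finset_iff.1 h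
  let a : ι → ℝ := fun j => if j ∈ s then g j else 0
  have has : ∀ j ∉ s, a j = 0 := fun j hj => if_neg hj
  have ha : Fintype.linearCombination ℝ f a = 0 := by
    simp [a, Fintype.linearCombination_apply, ite_smul, Finset.sum_ite_mem, hg]
  rcases hgi.lt_or_gt with hneg | hpos
  · exact ⟨-a, fun j hj => by simp [has j hj], by rw [map_neg, ha, neg_zero], i,
      by simp [a, hi, hneg]⟩
  · exact ⟨a, has, ha, i, by simp [a, hi, hpos]⟩

/-- Moving from `c` along a positive relation `a` by the largest step `t` that keeps `c - t • a`
nonnegative kills one coefficient. -/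
theorem exists_nonneg_erase_of_relation [DecidableEq ι] {f : ι → V} {s : Finset ι} {c a : ι → ℝ}
    (hc : 0 ≤ c) (hcs : ∀ i ∉ s, c i = 0) (has : ∀ i ∉ s, a i = 0)
    (ha : Fintype.linearCombination ℝ f a = 0) (hpos : ∃ i, 0 < a i) :
    ∃ j ∈ s, ∃ c' : ι → ℝ, 0 ≤ c' ∧ (∀ i ∉ s.erase j, c' i = 0) ∧
      Fintype.linearCombination ℝ f c' = Fintype.linearCombination ℝ f c := by
  obtain ⟨j, hj, hmin⟩ := ({i | 0 < a i} : Finset ι).exists_min_image (fun i => c i / a i)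
    (by obtain ⟨i, hi⟩ := hpos; exact ⟨i, by simpa using hi⟩)
  replace hj : 0 < a j := by simpa using hj
  have hjs : j ∈ s := by_contra fun h => hj.ne' (has j h)
  set t := c j / a j
  have ht : 0 ≤ t := div_nonneg (hc j) hj.le
  refine ⟨j, hjs, c - t • a, fun i => ?_, fun i hi => ?_, by simp [ha]⟩
  · have hci : 0 ≤ c i := hc i
    simp only [Pi.zero_apply, Pi.sub_apply, Pi.smul_apply, smul_eq_mul, sub_nonneg]
    rcases lt_or_ge 0 (a i) with h | h
    · exact (le_div_iff₀ h).1 (hmin i (by simpa using h))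
    · nlinarith
  · rw [Finset.mem_erase, not_and_or, not_not] at hi
    rcases hi with rfl | hi
    · simp [t, div_mul_cancel₀ _ hj.ne']
    · simp [hcs i hi, has i hi]

theorem exists_linearIndepOn_nonneg_coeffs (f : ι → V) {c : ι → ℝ} (hc : 0 ≤ c) :
    ∃ s : Finset ι, LinearIndepOn ℝ f s ∧ ∃ d : ι → ℝ, 0 ≤ d ∧ (∀ i ∉ s, d i = 0) ∧
      Fintype.linearCombination ℝ f d = Fintype.linearCombination ℝ f c := by
  suffices ∀ s : Finset ι, ∀ c : ι → ℝ, 0 ≤ c → (∀ i ∉ s, c i = 0) →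
      ∃ t : Finset ι, LinearIndepOn ℝ f t ∧ ∃ d : ι → ℝ, 0 ≤ d ∧ (∀ i ∉ t, d i = 0) ∧
        Fintype.linearCombination ℝ f d = Fintype.linearCombination ℝ f c from
    this Finset.univ c hc (by simp)
  classical
  intro s
  induction s using Finset.strongInduction with
  | H s ih =>
    intro c hc hcs
    by_cases hs : LinearIndepOn ℝ f s
    · exact ⟨s, hs, c, hc, hcs, rfl⟩
    obtain ⟨a, has, ha, hpos⟩ := exists_pos_relation_of_not_linearIndepOn hs
    obtain ⟨j, hj, c', hc', hc's, hc'c⟩ := exists_nonneg_erase_of_relation hc hcs has ha hpos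
    obtain ⟨t, ht, d, hd, hdt, hdc'⟩ := ih _ (Finset.erase_ssubset hj) c' hc' hc's
    exact ⟨t, ht, d, hd, hdt, hdc'.trans hc'c⟩

variable [TopologicalSpace V] [IsTopologicalAddGroup V] [ContinuousSMul ℝ V] [T2Space V]

theorem isClosed_image_nonneg_supported (f : ι → V) {s : Finset ι} (hs : LinearIndepOn ℝ f s) :
    IsClosed (Fintype.linearCombination ℝ f '' {c | 0 ≤ c ∧ ∀ i ∉ s, c i = 0}) := by
  let P : Submodule ℝ (ι → ℝ) := Submodule.pi (↑s)ᶜ fun _ => ⊥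
  have mem_P {c : ι → ℝ} : c ∈ P ↔ ∀ i ∉ s, c i = 0 := by simp [P, Submodule.mem_pi]
  have hinj : LinearMap.ker ((Fintype.linearCombination ℝ f).domRestrict P) = ⊥ := by
    rw [LinearMap.ker_eq_bot']
    rintro ⟨c, hcP⟩ hc
    have hcs := mem_P.1 hcP
    have hsum : ∑ i ∈ s, c i • f i = 0 := by
      rw [Finset.sum_subset (Finset.subset_univ s) fun i _ hi => by simp [hcs i hi]]
      simpa [Fintype.linearCombination_apply] using hc
    ext i
    by_cases hi : i ∈ s
    · exact linearIndepOn_finset_iff.1 hs c hsum i hi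
    · exact hcs i hi
  have hK : IsClosed {c : P | 0 ≤ (c : ι → ℝ)} :=
    isClosed_le continuous_const continuous_subtype_val
  convert (LinearMap.isClosedEmbedding_of_injective hinj).isClosedMap _ hK using 1
  ext x
  constructor
  · rintro ⟨c, ⟨hc, hcs⟩, rfl⟩
    exact ⟨⟨c, mem_P.2 hcs⟩, hc, rfl⟩
  · rintro ⟨⟨c, hcP⟩, hc, rfl⟩
    exact ⟨c, ⟨hc, mem_P.1 hcP⟩, rfl⟩

theorem isClosed_coneHull_range (f : ι → V) : IsClosed (coneHull (range f)) := by
  have hunion : coneHull (range f) = ⋃ s ∈ {s : Finset ι | LinearIndepOn ℝ f s},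
      Fintype.linearCombination ℝ f '' {c | 0 ≤ c ∧ ∀ i ∉ s, c i = 0} := by
    rw [coneHull_range]
    ext x
    simp only [mem_image, mem_iUnion, mem_ofPred_eq, exists_prop]
    constructor
    · rintro ⟨c, hc, rfl⟩
      obtain ⟨s, hs, d, hd, hds, hdc⟩ := exists_linearIndepOn_nonneg_coeffs f hc
      exact ⟨s, hs, d, ⟨hd, hds⟩, hdc⟩
    · rintro ⟨s, -, c, ⟨hc, -⟩, rfl⟩
      exact ⟨c, hc, rfl⟩
  rw [hunion]
  exact (toFinite _).isClosed_biUnion fun s hs => isClosed_image_nonneg_supported f hs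

end ConeHull

section Polar

variable {n : ℕ}

theorem pairDot_comm (p q : (Fin n → ℝ) × (Fin n → ℝ)) : pairDot p q = pairDot q p := by
  simp [pairDot, dotProduct_comm]

def pairDotBilin (n : ℕ) :
    ((Fin n → ℝ) × (Fin n → ℝ)) →ₗ[ℝ] ((Fin n → ℝ) × (Fin n → ℝ)) →ₗ[ℝ] ℝ :=
  LinearMap.mk₂ ℝ pairDot
    (fun _ _ _ => by simp only [pairDot, Prod.fst_add, Prod.snd_add, add_dotProduct]; ring)
    (fun _ _ _ => by simp [pairDot, mul_add])
    (fun _ _ _ => by simp only [pairDot, Prod.fst_add, Prod.snd_add, dotProduct_add]; ring)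
    (fun _ _ _ => by simp [pairDot, mul_add])

@[simp]
theorem pairDotBilin_apply (p q : (Fin n → ℝ) × (Fin n → ℝ)) : pairDotBilin n p q = pairDot p q :=
  rfl

theorem exists_eq_pairDot (φ : ((Fin n → ℝ) × (Fin n → ℝ)) →ₗ[ℝ] ℝ) :
    ∃ η, ∀ p, φ p = pairDot p η := by
  refine ⟨(fun i => φ (Pi.single i 1, 0), fun i => φ (0, Pi.single i 1)), fun p => ?_⟩
  have hinl := LinearMap.pi_apply_eq_sum_univ (φ ∘ₗ LinearMap.inl ℝ _ _) p.1
  have hinr := LinearMap.pi_apply_eq_sum_univ (φ ∘ₗ LinearMap.inr ℝ _ _) p.2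
  simp only [LinearMap.comp_apply, LinearMap.inl_apply, LinearMap.inr_apply] at hinl hinr
  rw [← Prod.fst_add_snd p, map_add, hinl, hinr]
  have single_eq (i : Fin n) : (fun j => if i = j then (1 : ℝ) else 0) = Pi.single i 1 := by
    ext j
    simp [Pi.single_apply, eq_comm]
  simp [pairDot, dotProduct, single_eq]

theorem pairDot_nonneg_of_mem_coneHull {S : Set ((Fin n → ℝ) × (Fin n → ℝ))}
    {η : (Fin n → ℝ) × (Fin n → ℝ)} (hη : ∀ d ∈ S, 0 ≤ pairDot d η) {x} (hx : x ∈ coneHull S) :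
    0 ≤ pairDot x η := by
  obtain ⟨k, c, g, hc, hg, rfl⟩ := hx
  rw [← pairDotBilin_apply, map_sum, LinearMap.sum_apply]
  exact Finset.sum_nonneg fun i _ => by simpa using mul_nonneg (hc i) (hη _ (hg i))

theorem polarPos_coneHull (S : Set ((Fin n → ℝ) × (Fin n → ℝ))) :
    polarPos (coneHull S) = polarPos S :=
  Subset.antisymm (fun _ hη d hd => hη d (subset_coneHull hd))
    fun _ hη _ hx => pairDot_nonneg_of_mem_coneHull hη hx

/-- Farkas' lemma, in the form of the bipolar theorem for finitely generated cones. -/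
theorem polarPos_polarPos_range {ι : Type*} [Fintype ι] (f : ι → (Fin n → ℝ) × (Fin n → ℝ)) :
    polarPos (polarPos (range f)) = coneHull (range f) := by
  refine Subset.antisymm (fun p hp => ?_)
    fun x hx η hη => pairDot_comm η x ▸ pairDot_nonneg_of_mem_coneHull
      (fun d hd => pairDot_comm d η ▸ hη d hd) hx
  by_contra hpC
  let C : ProperCone ℝ ((Fin n → ℝ) × (Fin n → ℝ)) :=
    ⟨(PointedCone.positive ℝ (ι → ℝ)).map (Fintype.linearCombination ℝ f), by
      simpa [coneHull_range] using isClosed_coneHull_range f⟩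
  have hC : (C : Set ((Fin n → ℝ) × (Fin n → ℝ))) = coneHull (range f) := by
    rw [coneHull_range]
    exact PointedCone.coe_map _ _
  obtain ⟨φ, hφC, hφp⟩ := C.hyperplane_separation_point (x₀ := p) (by rwa [← SetLike.mem_coe, hC])
  obtain ⟨η, hη⟩ := exists_eq_pairDot (φ : ((Fin n → ℝ) × (Fin n → ℝ)) →ₗ[ℝ] ℝ)
  have hηpolar : η ∈ polarPos (range f) := by
    rintro _ ⟨i, rfl⟩
    rw [← hη]
    exact hφC _ (by rw [← SetLike.mem_coe, hC]; exact subset_coneHull (mem_range_self i))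
  have := hp η hηpolar
  rw [pairDot_comm, ← hη] at this
  exact hφp.not_ge this

end Polar

theorem graphOf_ofGraph {n : ℕ} (G : Set ((Fin n → ℝ) × (Fin n → ℝ))) : graphOf (ofGraph G) = G :=
  rfl

theorem Ici_zero_sub_Ici_zero {α : Type*} [AddCommGroup α] [Lattice α] [IsOrderedAddMonoid α] :
    (Ici 0 : Set α) - Ici 0 = univ :=
  eq_univ_of_forall fun v => ⟨v⁺, posPart_nonneg v, v⁻, negPart_nonneg v, posPart_sub_negPart v⟩

theorem image_Ici_zero_sub_image_Ici_zero {ι M : Type*} [AddCommGroup M] [Module ℝ M]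
    (L : (ι → ℝ) →ₗ[ℝ] M) : L '' Ici 0 - L '' Ici 0 = range L := by
  rw [← image_sub, Ici_zero_sub_Ici_zero, image_univ]

section Data

variable {n T m : ℕ}

theorem colPairs_eq_range (X Y : Matrix (Fin n) (Fin T) ℝ) :
    colPairs X Y =
      range fun t => ((fun i => X i t, fun i => Y i t) : (Fin n → ℝ) × (Fin n → ℝ)) := by
  ext p
  simp [colPairs, eq_comm]

theorem linearCombination_colPairs (X Y : Matrix (Fin n) (Fin T) ℝ) :
    Fintype.linearCombination ℝ
        (fun t => ((fun i => X i t, fun i => Y i t) : (Fin n → ℝ) × (Fin n → ℝ))) =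
      (mulVecLin X).prod (mulVecLin Y) := by
  refine LinearMap.ext fun v => Prod.ext (funext fun i => ?_) (funext fun i => ?_) <;>
    simp [Fintype.linearCombination_apply, Prod.fst_sum, Prod.snd_sum, Finset.sum_apply, mulVec,
      dotProduct, mul_comm]

theorem graphOf_mpup_colPairs (X Y : Matrix (Fin n) (Fin T) ℝ) :
    graphOf (mpup (colPairs X Y)) = (mulVecLin X).prod (mulVecLin Y) '' Ici 0 := by
  rw [mpup, graphOf_ofGraph, colPairs_eq_range, coneHull_range, linearCombination_colPairs]

theorem pairDot_rowPair (Z W : Matrix (Fin m) (Fin n) ℝ) (i : Fin m)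
    (p : (Fin n → ℝ) × (Fin n → ℝ)) :
    pairDot (fun j => Z i j, fun j => -W i j) p = (Z *ᵥ p.1) i - (W *ᵥ p.2) i := by
  simp [pairDot, mulVec, dotProduct, sub_eq_add_neg]

theorem polarPos_rowPairsZW (Z W : Matrix (Fin m) (Fin n) ℝ) :
    polarPos (rowPairsZW Z W) = {p | W *ᵥ p.2 ≤ Z *ᵥ p.1} := by
  ext p
  simp [polarPos, rowPairsZW, pairDot_rowPair, Pi.le_def]

end Data

/-- The minimal and maximal linear processes of `H_D`:
`graph L_-(H_D) = ker [Z −W]` and `graph L_+(H_D) = im [X; Y]`. -/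
theorem stmt9 {n T m : ℕ} (X Y : Matrix (Fin n) (Fin T) ℝ) (Z W : Matrix (Fin m) (Fin n) ℝ)
    (hZW : polarPos (colPairs X Y) = coneHull (rowPairsZW Z W)) :
    graphOf (Lminus (mpup (colPairs X Y))) = {p | Z *ᵥ p.1 = W *ᵥ p.2} ∧
    graphOf (Lplus (mpup (colPairs X Y))) = {p | ∃ v : Fin T → ℝ, p = (X *ᵥ v, Y *ᵥ v)} := by
  have hcone : graphOf (mpup (colPairs X Y)) = {p | W *ᵥ p.2 ≤ Z *ᵥ p.1} := by
    rw [mpup, graphOf_ofGraph, colPairs_eq_range, ← polarPos_polarPos_range, ← colPairs_eq_range,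
      hZW, polarPos_coneHull, polarPos_rowPairsZW]
  constructor
  · rw [Lminus, graphOf_ofGraph, hcone]
    ext p
    simp [mulVec_neg, le_antisymm_iff]
  · rw [Lplus, graphOf_ofGraph, graphOf_mpup_colPairs, image_Ici_zero_sub_image_Ici_zero]
    ext p
    simp [eq_comm]
end

section
/- Let L : ℝ^n ⇒ ℝ^n be a linear process. Then the reachable set of L equals the n-fold image of the origin, R(L) = L^n({0}), and the feasible set of L equals the n-fold inverse image of the whole space, F(L) = L^{-n}(ℝ^n) = (L^{-1})^n(ℝ^n). -/
/-!
Since the graph of `L` is a subspace, `L` maps subspaces to subspaces, so the sets `L^q({0})`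
form an increasing and the sets `(L⁻¹)^q(ℝ^n)` a decreasing chain of subspaces of `ℝ^n`.
Counting dimensions, both chains are constant from step `n` on. The reachable set is the union
of the first chain; the stable term of the second is a fixed point of `L⁻¹`, so each of its
points has an `L`-successor in it, and iterating a choice of successors gives an infinite
trajectory.
-/

open Matrix Set Pointwise

open Module Function

theorem Nat.exists_le_eq_succ_of_monotone_of_le {f : ℕ → ℕ} (hf : Monotone f) {d : ℕ}
    (hd : f (d + 1) ≤ d) : ∃ q ≤ d, f q = f (q + 1) := by
  by_contra! h
  have hgrow : ∀ q ≤ d + 1, q ≤ f q := by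
    intro q hq
    induction q with
    | zero => exact Nat.zero_le _
    | succ q ih =>
      have := lt_of_le_of_ne (hf (Nat.le_add_right q 1)) (h q (by omega))
      have := ih (by omega)
      omega
  have := hgrow (d + 1) le_rfl
  omega

theorem Function.IsFixedPt.iterate_eq_of_le {α : Type*} {f : α → α} {x : α} {q m : ℕ}
    (hfix : IsFixedPt f (f^[q] x)) (hqm : q ≤ m) : f^[m] x = f^[q] x := by
  rw [← Nat.sub_add_cancel hqm, iterate_add_apply, (hfix.iterate (m - q)).eq]

section Stabilization

variable {K V : Type*} [Field K] [AddCommGroup V] [Module K V] [FiniteDimensional K V]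

theorem Submodule.exists_le_finrank_eq_succ_of_monotone {s : ℕ → Submodule K V}
    (hs : Monotone s) : ∃ q ≤ finrank K V, s q = s (q + 1) := by
  obtain ⟨q, hq, heq⟩ := Nat.exists_le_eq_succ_of_monotone_of_le
    (fun _ _ h => Submodule.finrank_mono (hs h)) (Submodule.finrank_le (s (finrank K V + 1)))
  exact ⟨q, hq, Submodule.eq_of_le_of_finrank_eq (hs (Nat.le_add_right q 1)) heq⟩

theorem Submodule.exists_le_finrank_eq_succ_of_antitone {s : ℕ → Submodule K V}
    (hs : Antitone s) : ∃ q ≤ finrank K V, s q = s (q + 1) := by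
  obtain ⟨q, hq, heq⟩ := Nat.exists_le_eq_succ_of_monotone_of_le
    (f := fun k => finrank K V - finrank K (s k))
    (fun _ _ h => Nat.sub_le_sub_left (Submodule.finrank_mono (hs h)) _) (Nat.sub_le _ _)
  have := Submodule.finrank_le (s q)
  have := Submodule.finrank_le (s (q + 1))
  exact ⟨q, hq, (Submodule.eq_of_le_of_finrank_eq (hs (Nat.le_add_right q 1)) (by omega)).symm⟩

theorem Submodule.isFixedPt_iterate_finrank {f : Submodule K V → Submodule K V}
    (hf : Monotone f) {P : Submodule K V} (hP : P ≤ f P ∨ f P ≤ P) :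
    IsFixedPt f (f^[finrank K V] P) := by
  obtain ⟨q, hq, heq⟩ : ∃ q ≤ finrank K V, f^[q] P = f^[q + 1] P := hP.elim
    (fun h => Submodule.exists_le_finrank_eq_succ_of_monotone (hf.monotone_iterate_of_le_map h))
    (fun h => Submodule.exists_le_finrank_eq_succ_of_antitone (hf.antitone_iterate_of_map_le h))
  have hfix : IsFixedPt f (f^[q] P) := by
    rw [IsFixedPt, ← iterate_succ_apply' f q P, ← heq]
  rwa [hfix.iterate_eq_of_le hq]

theorem Submodule.iterate_le_iterate_finrank {f : Submodule K V → Submodule K V}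
    (hf : Monotone f) {P : Submodule K V} (hP : P ≤ f P) (m : ℕ) :
    f^[m] P ≤ f^[finrank K V] P := by
  rcases le_total m (finrank K V) with hm | hm
  · exact hf.monotone_iterate_of_le_map hP hm
  · exact ((Submodule.isFixedPt_iterate_finrank hf (Or.inl hP)).iterate_eq_of_le hm).le

end Stabilization

def Submodule.relImage {R M : Type*} [Semiring R] [AddCommMonoid M] [Module R M]
    (S : Submodule R (M × M)) (P : Submodule R M) : Submodule R M :=
  (S ⊓ P.comap (LinearMap.fst R M M)).map (LinearMap.snd R M M)

theorem Submodule.relImage_mono {R M : Type*} [Semiring R] [AddCommMonoid M] [Module R M]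
    (S : Submodule R (M × M)) : Monotone S.relImage :=
  fun _ _ h => Submodule.map_mono (inf_le_inf_left S (Submodule.comap_mono h))

section Trajectories

variable {n : ℕ} {H : SVMap n}

theorem forall_lt_succ_update_mem {x : ℕ → Fin n → ℝ} {q : ℕ}
    (hx : ∀ k < q, x (k + 1) ∈ H (x k)) {y : Fin n → ℝ} (hy : y ∈ H (x q)) :
    ∀ k < q + 1, update x (q + 1) y (k + 1) ∈ H (update x (q + 1) y k) := by
  intro k hk
  rw [update_of_ne (by omega : k ≠ q + 1)]
  rcases Nat.lt_succ_iff_lt_or_eq.mp hk with hk | rfl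
  · rw [update_of_ne (by omega : k + 1 ≠ q + 1)]
    exact hx k hk
  · rwa [update_self]

theorem mem_iterate_imageSV_iff {A : Set (Fin n → ℝ)} {q : ℕ} {ξ : Fin n → ℝ} :
    ξ ∈ (imageSV H)^[q] A ↔
      ∃ x : ℕ → Fin n → ℝ, x 0 ∈ A ∧ x q = ξ ∧ ∀ k < q, x (k + 1) ∈ H (x k) := by
  induction q generalizing ξ with
  | zero =>
    exact ⟨fun hξ => ⟨fun _ => ξ, hξ, rfl, nofun⟩, fun ⟨x, hx0, hxq, _⟩ => hxq ▸ hx0⟩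
  | succ q ih =>
    rw [iterate_succ_apply']
    constructor
    · rintro ⟨η, hη, hξ⟩
      obtain ⟨x, hx0, rfl, hx⟩ := ih.mp hη
      exact ⟨update x (q + 1) ξ, by rwa [update_of_ne (by omega)], update_self _ _ _,
        forall_lt_succ_update_mem hx hξ⟩
    · rintro ⟨x, hx0, rfl, hx⟩
      exact ⟨x q, ih.mpr ⟨x, hx0, rfl, fun k hk => hx k (by omega)⟩, hx q (by omega)⟩

theorem mem_iterate_imageSV_invSV_iff {A : Set (Fin n → ℝ)} {q : ℕ} {ξ : Fin n → ℝ} :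
    ξ ∈ (imageSV (invSV H))^[q] A ↔
      ∃ x : ℕ → Fin n → ℝ, x 0 = ξ ∧ x q ∈ A ∧ ∀ k < q, x (k + 1) ∈ H (x k) := by
  induction q generalizing A with
  | zero =>
    exact ⟨fun hξ => ⟨fun _ => ξ, rfl, hξ, nofun⟩, fun ⟨x, hx0, hxq, _⟩ => hx0 ▸ hxq⟩
  | succ q ih =>
    rw [iterate_succ_apply, ih]
    constructor
    · rintro ⟨x, rfl, ⟨y, hy, hxy⟩, hx⟩
      exact ⟨update x (q + 1) y, update_of_ne (by omega) _ _, by rwa [update_self],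
        forall_lt_succ_update_mem hx hxy⟩
    · rintro ⟨x, rfl, hxq, hx⟩
      exact ⟨x, rfl, ⟨x (q + 1), hxq, hx q (by omega)⟩, fun k hk => hx k (by omega)⟩

theorem reachSet_eq_iUnion_iterate_imageSV (H : SVMap n) :
    reachSet H = ⋃ q, (imageSV H)^[q] {0} := by
  ext ξ
  simp only [mem_iUnion, mem_iterate_imageSV_iff, mem_singleton_iff]
  rfl

theorem feasSet_subset_iterate_imageSV_invSV (H : SVMap n) (q : ℕ) :
    feasSet H ⊆ (imageSV (invSV H))^[q] univ :=
  fun _ ⟨x, hx0, hx⟩ => mem_iterate_imageSV_invSV_iff.mpr ⟨x, hx0, trivial, fun k _ => hx k⟩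

theorem subset_feasSet_of_subset_imageSV_invSV {B : Set (Fin n → ℝ)}
    (hB : B ⊆ imageSV (invSV H) B) : B ⊆ feasSet H := by
  have hstep : ∀ z : B, ∃ y : B, (y : Fin n → ℝ) ∈ H z := fun z => by
    obtain ⟨y, hy, hzy⟩ := hB z.2
    exact ⟨⟨y, hy⟩, hzy⟩
  choose next hnext using hstep
  intro ξ hξ
  refine ⟨fun k => next^[k] ⟨ξ, hξ⟩, rfl, fun k => ?_⟩
  simp only [iterate_succ_apply']
  exact hnext _

end Trajectories

section LinearProcess

variable {n : ℕ}

theorem IsLinearProcess.invSV {L : SVMap n} (hL : IsLinearProcess L) :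
    IsLinearProcess (invSV L) := by
  obtain ⟨S, hS⟩ := hL
  refine ⟨S.map (LinearEquiv.prodComm ℝ (Fin n → ℝ) (Fin n → ℝ)).toLinearMap, ?_⟩
  ext ⟨x, y⟩
  rw [SetLike.mem_coe, Submodule.mem_map_equiv, ← SetLike.mem_coe, ← hS]
  rfl

theorem imageSV_coe_eq_relImage {L : SVMap n} {S : Submodule ℝ ((Fin n → ℝ) × (Fin n → ℝ))}
    (hS : graphOf L = S) (P : Submodule ℝ (Fin n → ℝ)) :
    imageSV L P = S.relImage P := by
  ext y
  constructor
  · rintro ⟨x, hx, hy⟩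
    exact ⟨(x, y), ⟨hS ▸ hy, hx⟩, rfl⟩
  · rintro ⟨⟨x, y⟩, ⟨hxy, hx⟩, rfl⟩
    exact ⟨x, hx, (hS.symm ▸ hxy : (x, y) ∈ graphOf L)⟩

theorem iterate_imageSV_coe_eq_relImage {L : SVMap n}
    {S : Submodule ℝ ((Fin n → ℝ) × (Fin n → ℝ))} (hS : graphOf L = S)
    (P : Submodule ℝ (Fin n → ℝ)) (q : ℕ) :
    (imageSV L)^[q] P = S.relImage^[q] P :=
  ((Semiconj.iterate_right (fun Q => (imageSV_coe_eq_relImage hS Q).symm) q) P).symm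

theorem IsLinearProcess.iterate_imageSV_zero_subset {L : SVMap n} (hL : IsLinearProcess L)
    (q : ℕ) : (imageSV L)^[q] {0} ⊆ (imageSV L)^[n] {0} := by
  obtain ⟨S, hS⟩ := hL
  have hle := Submodule.iterate_le_iterate_finrank S.relImage_mono (bot_le (a := S.relImage ⊥)) q
  rw [finrank_fin_fun] at hle
  rw [← Submodule.bot_coe (R := ℝ), iterate_imageSV_coe_eq_relImage hS,
    iterate_imageSV_coe_eq_relImage hS]
  exact hle

theorem IsLinearProcess.isFixedPt_iterate_imageSV_univ {L : SVMap n} (hL : IsLinearProcess L) :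
    IsFixedPt (imageSV L) ((imageSV L)^[n] univ) := by
  obtain ⟨S, hS⟩ := hL
  have hfix :=
    Submodule.isFixedPt_iterate_finrank S.relImage_mono (Or.inr (le_top (a := S.relImage ⊤)))
  rw [finrank_fin_fun] at hfix
  rw [← Submodule.top_coe (R := ℝ), iterate_imageSV_coe_eq_relImage hS, IsFixedPt,
    imageSV_coe_eq_relImage hS, hfix.eq]

end LinearProcess

/-- For a linear process `L`: `R(L) = L^n({0})` and `F(L) = L^{-n}(ℝ^n) = (L^{-1})^n(ℝ^n)`. -/
theorem stmt16 {n : ℕ} (L : SVMap n) (hL : IsLinearProcess L) :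
    reachSet L = (imageSV L)^[n] {0} ∧
    feasSet L = (imageSV (invSV L))^[n] Set.univ := by
  refine ⟨?_, ?_⟩
  · rw [reachSet_eq_iUnion_iterate_imageSV]
    exact Subset.antisymm (iUnion_subset hL.iterate_imageSV_zero_subset)
      (subset_iUnion (fun q => (imageSV L)^[q] {0}) n)
  · refine (feasSet_subset_iterate_imageSV_invSV L n).antisymm
      (subset_feasSet_of_subset_imageSV_invSV ?_)
    exact hL.invSV.isFixedPt_iterate_imageSV_univ.symm.subset
end
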